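/- arXiv:1512.08709 — 5 statements merged into one kernel-verified Lean document; each statement's English description precedes it below -/
import Mathlib

section
/- Let X be a Banach space and L' a norm on X* whose induced topology makes the closed unit ball of X* compact. Define L(x) = sup{|ξ(x)| : ξ ∈ X*, L'(ξ) ≤ 1} for x ∈ X (viewing X inside X**). Then the set C = {x ∈ X : L(x) ≤ 1} is compact in the norm topology of X. -/
open Filter Topology
open scoped ENNReal

/-- The topology induced by a (semi)norm-like function `L`: the topology generated by the
open balls of the translation-invariant (pseudo)metric `d(x,y) = L (x - y)`. -/
def ballTopology {E : Type*} [AddGroup E] (L : E → ℝ) : TopologicalSpace E :=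
  TopologicalSpace.generateFrom {s | ∃ c r, s = {x | L (x - c) < r}}

/-- Let `X` be a Banach space and `L'` a norm on `X*` whose induced topology
makes the closed unit ball of `X*` compact. Define `L x = sup {|ξ x| : L' ξ ≤ 1}` (an
extended real). Then `C = {x | L x ≤ 1}` is compact in the norm topology of `X`. -/
theorem stmt2 {X : Type*} [NormedAddCommGroup X] [NormedSpace ℝ X] [CompleteSpace X]
    (L' : (X →L[ℝ] ℝ) → ℝ)
    (hnonneg : ∀ ξ, 0 ≤ L' ξ)
    (hadd : ∀ ξ η, L' (ξ + η) ≤ L' ξ + L' η)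
    (hsmul : ∀ (c : ℝ) (ξ : X →L[ℝ] ℝ), L' (c • ξ) = |c| * L' ξ)
    (hdef : ∀ ξ, L' ξ = 0 → ξ = 0)
    (hcompact : @IsCompact _ (ballTopology L') {ξ : X →L[ℝ] ℝ | ‖ξ‖ ≤ 1})
    (L : X → ℝ≥0∞)
    (hL : ∀ x, L x = ⨆ ξ ∈ {ξ : X →L[ℝ] ℝ | L' ξ ≤ 1}, ENNReal.ofReal |ξ x|) :
    IsCompact {x : X | L x ≤ 1} := by
  have hL'0 : L' 0 = 0 := by
    have := hsmul 0 0; simpa using this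
  -- membership criterion
  have hmem : ∀ x, L x ≤ 1 → ∀ ξ, L' ξ ≤ 1 → |ξ x| ≤ 1 := by
    intro x hx ξ hξ
    have h1 : ENNReal.ofReal |ξ x| ≤ L x := by
      rw [hL]
      exact le_iSup₂ (f := fun ξ (_ : ξ ∈ {ξ : X →L[ℝ] ℝ | L' ξ ≤ 1}) =>
        ENNReal.ofReal |ξ x|) ξ hξ
    have := h1.trans hx
    rwa [ENNReal.ofReal_le_one] at this
  -- key evaluation bound: for `x ∈ C`, `|ζ x| ≤ L' ζ`
  have hev : ∀ x, L x ≤ 1 → ∀ ζ : X →L[ℝ] ℝ, |ζ x| ≤ L' ζ := by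
    intro x hx ζ
    rcases eq_or_lt_of_le (hnonneg ζ) with h0 | hpos
    · have hz : ζ = 0 := hdef ζ h0.symm
      simp [hz, hL'0]
    · have hinv : (0:ℝ) < (L' ζ)⁻¹ := inv_pos.mpr hpos
      have h1 := hmem x hx ((L' ζ)⁻¹ • ζ) (by
        rw [hsmul, abs_of_pos hinv, inv_mul_cancel₀ hpos.ne'])
      have h2 : |((L' ζ)⁻¹ • ζ) x| = (L' ζ)⁻¹ * |ζ x| := by
        simp [abs_mul, abs_of_pos hinv]
      rw [h2] at h1
      calc |ζ x| = L' ζ * ((L' ζ)⁻¹ * |ζ x|) := by field_simp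
        _ ≤ L' ζ * 1 := mul_le_mul_of_nonneg_left h1 hpos.le
        _ = L' ζ := mul_one _
  -- generators of `ballTopology` are open
  have hopen : ∀ (c : X →L[ℝ] ℝ) (r : ℝ), @IsOpen _ (ballTopology L') {η | L' (η - c) < r} :=
    fun c r => TopologicalSpace.GenerateOpen.basic _ ⟨c, r, rfl⟩
  -- `L'` is bounded on the unit ball
  obtain ⟨s, hs⟩ := @IsCompact.elim_finite_subcover _ (ballTopology L') _ ℕ hcompact
    (fun n : ℕ => {η | L' (η - 0) < n})
    (fun n => hopen 0 n) (by
      intro ξ _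
      simp only [Set.mem_iUnion, Set.mem_setOf_eq, sub_zero]
      exact ⟨⌈L' ξ⌉₊ + 1, by
        push_cast
        exact (Nat.le_ceil _).trans_lt (by linarith)⟩)
  set R : ℝ := (s.sup id : ℕ) + 1 with hRdef
  have hRpos : (0:ℝ) < R := by positivity
  have hball : ∀ ξ : X →L[ℝ] ℝ, ‖ξ‖ ≤ 1 → L' ξ ≤ R := by
    intro ξ hξ
    obtain ⟨n, hn, hlt⟩ := Set.mem_iUnion₂.mp (hs hξ)
    simp only [Set.mem_setOf_eq, sub_zero] at hlt
    have hle : (n : ℝ) ≤ ((s.sup id : ℕ) : ℝ) := by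
      exact_mod_cast Finset.le_sup (f := id) hn
    rw [hRdef]; linarith
  -- elements of `C` are norm-bounded by `R`
  have hCbdd : ∀ x, L x ≤ 1 → ‖x‖ ≤ R := by
    intro x hx
    refine NormedSpace.norm_le_dual_bound ℝ x hRpos.le (fun f => ?_)
    rcases eq_or_ne f 0 with rfl | hne
    · simp
    · have hfn : (0:ℝ) < ‖f‖ := norm_pos_iff.mpr hne
      have h1 : |f x| ≤ L' f := hev x hx f
      have h2 : L' f = ‖f‖ * L' (‖f‖⁻¹ • f) := by
        rw [hsmul, abs_of_pos (inv_pos.mpr hfn)]; field_simp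
      have hnorm1 : ‖(‖f‖⁻¹ • f : X →L[ℝ] ℝ)‖ ≤ 1 := by
        rw [norm_smul, norm_inv, norm_norm, inv_mul_cancel₀ hfn.ne']
      have h3 : L' (‖f‖⁻¹ • f) ≤ R := hball (‖f‖⁻¹ • f) hnorm1
      have : |f x| ≤ ‖f‖ * R := by
        calc |f x| ≤ L' f := h1
          _ = ‖f‖ * L' (‖f‖⁻¹ • f) := h2
          _ ≤ ‖f‖ * R := mul_le_mul_of_nonneg_left h3 hfn.le
      simpa [Real.norm_eq_abs, mul_comm] using this
  -- totally bounded
  have htb : TotallyBounded {x : X | L x ≤ 1} := by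
    rw [Metric.totallyBounded_iff]
    intro ε hε
    set δ : ℝ := ε / 4 with hδdef
    have hδpos : 0 < δ := by positivity
    -- finite δ-net of the unit ball for L'
    obtain ⟨t, ht⟩ := @IsCompact.elim_finite_subcover _ (ballTopology L') _
      {ξ : X →L[ℝ] ℝ // ‖ξ‖ ≤ 1} hcompact (fun i => {η | L' (η - i.1) < δ})
      (fun i => hopen _ _) (fun ξ hξ => Set.mem_iUnion.mpr ⟨⟨ξ, hξ⟩, by
        simp only [Set.mem_setOf_eq, sub_self, hL'0]; exact hδpos⟩)
    -- the map to finitely many coordinates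
    set Φ : X → (t → ℝ) := fun x i => (i : {ξ : X →L[ℝ] ℝ // ‖ξ‖ ≤ 1}).1 x with hΦdef
    -- key: coordinates δ-close forces norm 3δ-close
    have hkey : ∀ x, L x ≤ 1 → ∀ y, L y ≤ 1 →
        (∀ i : t, |Φ x i - Φ y i| < δ) → ‖x - y‖ ≤ 3 * δ := by
      intro x hx y hy hcoord
      refine NormedSpace.norm_le_dual_bound ℝ (x - y) (by positivity) (fun f => ?_)
      rcases eq_or_ne f 0 with rfl | hne
      · simp
      · have hfn : (0:ℝ) < ‖f‖ := norm_pos_iff.mpr hne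
        have hg1' : ‖(‖f‖⁻¹ • f : X →L[ℝ] ℝ)‖ ≤ 1 := by
          rw [norm_smul, norm_inv, norm_norm, inv_mul_cancel₀ hfn.ne']
        set g := (‖f‖⁻¹ • f : X →L[ℝ] ℝ) with hgdef
        have hg1 : ‖g‖ ≤ 1 := hg1'
        obtain ⟨i, hi, hgi⟩ := Set.mem_iUnion₂.mp (ht hg1)
        simp only [Set.mem_setOf_eq] at hgi
        have hdiff : ∀ z, L z ≤ 1 → |g z - i.1 z| ≤ L' (g - i.1) := by
          intro z hz
          simpa using hev z hz (g - i.1)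
        have h1 : |g (x - y) - i.1 (x - y)| < 2 * δ := by
          have hx' := hdiff x hx
          have hy' := hdiff y hy
          have : |(g x - i.1 x) - (g y - i.1 y)| ≤ |g x - i.1 x| + |g y - i.1 y| :=
            abs_sub (g x - i.1 x) (g y - i.1 y)
          calc |g (x - y) - i.1 (x - y)| = |(g x - i.1 x) - (g y - i.1 y)| := by
                rw [map_sub, map_sub]; ring_nf
            _ ≤ |g x - i.1 x| + |g y - i.1 y| := this
            _ ≤ L' (g - i.1) + L' (g - i.1) := add_le_add hx' hy'
            _ < 2 * δ := by linarith
        have h2 : |i.1 (x - y)| < δ := by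
          have := hcoord ⟨i, hi⟩
          simpa [hΦdef, map_sub] using this
        have h3 : |g (x - y)| < 3 * δ := by
          have habs : |g (x - y)| ≤ |i.1 (x - y)| + |g (x - y) - i.1 (x - y)| := by
            simpa using abs_add_le (i.1 (x - y)) (g (x - y) - i.1 (x - y))
          linarith
        have h4 : |f (x - y)| = ‖f‖ * |g (x - y)| := by
          have : g (x - y) = ‖f‖⁻¹ * f (x - y) := by simp [hgdef]
          rw [this, abs_mul, abs_of_pos (inv_pos.mpr hfn)]
          field_simp
        calc ‖f (x - y)‖ = |f (x - y)| := Real.norm_eq_abs _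
          _ = ‖f‖ * |g (x - y)| := h4
          _ ≤ ‖f‖ * (3 * δ) := mul_le_mul_of_nonneg_left h3.le (norm_nonneg f)
          _ = 3 * δ * ‖f‖ := by ring
    -- the image of C under Φ is totally bounded
    have himg : TotallyBounded (Φ '' {x : X | L x ≤ 1}) := by
      refine (isCompact_closedBall (0 : t → ℝ) R).totallyBounded.subset ?_
      rintro _ ⟨x, hx, rfl⟩
      rw [Metric.mem_closedBall, dist_zero_right]
      rw [pi_norm_le_iff_of_nonneg hRpos.le]
      intro i
      rw [Real.norm_eq_abs]
      exact (hev x hx _).trans (hball _ (i : {ξ : X →L[ℝ] ℝ // ‖ξ‖ ≤ 1}).2)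
    -- extract a finite δ-net of the image with centers in the image
    obtain ⟨F, hFsub, hFfin, hFcov⟩ := totallyBounded_iff_subset.mp himg
      {p | dist p.1 p.2 < δ} (Metric.dist_mem_uniformity hδpos)
    -- choose preimages
    choose pre hpre hpreim using fun v (hv : v ∈ F) =>
      (hFsub hv : v ∈ Φ '' {x : X | L x ≤ 1})
    classical
    set pre' : (t → ℝ) → X := fun v => if h : v ∈ F then pre v h else 0 with hpre'def
    refine ⟨pre' '' F, hFfin.image _, ?_⟩
    intro x hx
    obtain ⟨v, hv, hdv⟩ := Set.mem_iUnion₂.mp (hFcov (Set.mem_image_of_mem Φ hx))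
    have hdv' : dist (Φ x) v < δ := hdv
    rw [← hpreim v hv] at hdv'
    have hcoord : ∀ i : t, |Φ x i - Φ (pre v hv) i| < δ := by
      intro i
      have := (dist_pi_lt_iff hδpos).mp hdv' i
      simpa [Real.dist_eq] using this
    have hnorm : ‖x - pre v hv‖ ≤ 3 * δ := hkey x hx (pre v hv) (hpre v hv) hcoord
    have hpe : pre' v = pre v hv := by rw [hpre'def]; simp [hv]
    refine Set.mem_iUnion₂.mpr ⟨pre' v, Set.mem_image_of_mem _ hv, ?_⟩
    rw [Metric.mem_ball, dist_eq_norm, hpe]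
    calc ‖x - pre v hv‖ ≤ 3 * δ := hnorm
      _ < ε := by rw [hδdef]; linarith
  -- closed
  have hclosed : IsClosed {x : X | L x ≤ 1} := by
    have heq : {x : X | L x ≤ 1} = ⋂ ξ ∈ {ξ : X →L[ℝ] ℝ | L' ξ ≤ 1}, {x : X | |ξ x| ≤ 1} := by
      ext x
      simp only [Set.mem_iInter, Set.mem_setOf_eq]
      constructor
      · exact fun hx ξ hξ => hmem x hx ξ hξ
      · intro h
        rw [hL]
        exact iSup₂_le fun ξ hξ => ENNReal.ofReal_le_one.mpr (h ξ hξ)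
    rw [heq]
    refine isClosed_biInter fun ξ hξ => ?_
    exact isClosed_le (continuous_abs.comp ξ.continuous) continuous_const
  exact TotallyBounded.isCompact_of_isClosed htb hclosed
end

section
/- Let X be a Banach space with a Lip-norm L (a norm defined on a dense subspace, extended by +∞, whose unit ball {x : L(x) ≤ 1} is norm compact), and let L' be the dual norm L'(ξ) = sup{|ξ(x)| : L(x) ≤ 1} on X*. Then on any norm-bounded subset of X*, the topology induced by L' coincides with the weak* topology. -/
open Filter Topology
open scoped ENNReal

set_option maxHeartbeats 1000000 in
/-- Let `X` be a Banach space with a Lip-norm `L` (an extended-real-valued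
norm, finite on a dense subspace, whose unit ball is norm compact), and let
`L' ξ = sup {|ξ x| : L x ≤ 1}` be the dual norm on `X*`. Then on any norm-bounded subset of
`X*` the topology induced by `L'` coincides with the weak* topology. -/
theorem stmt4 {X : Type*} [NormedAddCommGroup X] [NormedSpace ℝ X] [CompleteSpace X]
    (L : X → ℝ≥0∞)
    (hadd : ∀ x y, L (x + y) ≤ L x + L y)
    (hsmul : ∀ (c : ℝ) (x : X), L (c • x) = ENNReal.ofReal |c| * L x)
    (hdef : ∀ x, L x = 0 → x = 0)
    (hdense : Dense {x : X | L x < ⊤})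
    (hcompact : IsCompact {x : X | L x ≤ 1})
    (L' : (X →L[ℝ] ℝ) → ℝ)
    (hL' : ∀ ξ, L' ξ = ⨆ x : {x : X | L x ≤ 1}, |ξ (x : X)|) :
    ∀ B : Set (X →L[ℝ] ℝ), Bornology.IsBounded B →
      TopologicalSpace.induced ((↑) : B → (X →L[ℝ] ℝ)) (ballTopology L') =
      TopologicalSpace.induced ((↑) : B → (X →L[ℝ] ℝ))
        (TopologicalSpace.induced (fun ξ : X →L[ℝ] ℝ => (ξ : X → ℝ)) inferInstance) := by
  intro B hB
  set K : Set X := {x : X | L x ≤ 1} with hKdef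
  have hL0 : L 0 = 0 := by
    have h := hsmul 0 0
    simpa using h
  have hK0 : (0 : X) ∈ K := by simp [hKdef, hL0]
  haveI hKnonempty : Nonempty K := ⟨⟨0, hK0⟩⟩
  -- bound for B
  obtain ⟨M₀, hM₀⟩ : ∃ C, ∀ ξ ∈ B, ‖ξ‖ ≤ C := isBounded_iff_forall_norm_le.mp hB
  set M : ℝ := max M₀ 1 with hMdef
  have hM1 : (1 : ℝ) ≤ M := le_max_right _ _
  have hM0 : 0 < M := lt_of_lt_of_le one_pos hM1
  have hM : ∀ ξ ∈ B, ‖ξ‖ ≤ M := fun ξ hξ => (hM₀ ξ hξ).trans (le_max_left _ _)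
  -- basic properties of L'
  have hbdd : ∀ ξ : X →L[ℝ] ℝ, BddAbove (Set.range fun x : K => |ξ (x : X)|) := by
    intro ξ
    have h := (hcompact.image (ξ.continuous.abs)).bddAbove
    rwa [Set.image_eq_range] at h
  have hle : ∀ (ξ : X →L[ℝ] ℝ) (x : X), x ∈ K → |ξ x| ≤ L' ξ := by
    intro ξ x hx
    rw [hL' ξ]
    exact le_ciSup (hbdd ξ) ⟨x, hx⟩
  have hnn : ∀ ξ, 0 ≤ L' ξ := by
    intro ξ
    have h := hle ξ 0 hK0
    simpa using h
  have hL'0 : L' 0 = 0 := by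
    rw [hL' 0]
    have h : (fun x : K => |(0 : X →L[ℝ] ℝ) (x : X)|) = fun _ : K => (0 : ℝ) := by
      ext x; simp
    rw [h]
    exact ciSup_const
  have hsub : ∀ ξ η : X →L[ℝ] ℝ, L' (ξ + η) ≤ L' ξ + L' η := by
    intro ξ η
    rw [hL' (ξ + η)]
    refine ciSup_le fun x => ?_
    calc |(ξ + η) (x : X)| = |ξ x + η x| := by simp
      _ ≤ |ξ x| + |η x| := abs_add_le _ _
      _ ≤ L' ξ + L' η := add_le_add (hle ξ x x.2) (hle η x x.2)
  have htri : ∀ a b c : X →L[ℝ] ℝ, L' (a - c) ≤ L' (a - b) + L' (b - c) := by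
    intro a b c
    have h := hsub (a - b) (b - c)
    simpa using h
  -- supremum bound: if all values on K are ≤ m then L' ξ ≤ m
  have hsup_le : ∀ (ξ : X →L[ℝ] ℝ) (m : ℝ), (∀ x : X, x ∈ K → |ξ x| ≤ m) → L' ξ ≤ m := by
    intro ξ m hm
    rw [hL' ξ]
    exact ciSup_le fun x => hm x x.2
  -- bound on finite-L vectors
  have hfin : ∀ (ξ : X →L[ℝ] ℝ) (y : X), L y ≠ ⊤ → |ξ y| ≤ ((L y).toReal + 1) * L' ξ := by
    intro ξ y hy
    set n : ℝ := (L y).toReal + 1 with hn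
    have hn0 : 0 < n := by positivity
    have hmem : n⁻¹ • y ∈ K := by
      show L (n⁻¹ • y) ≤ 1
      rw [hsmul, abs_of_pos (inv_pos.mpr hn0)]
      have h1 : L y ≤ ENNReal.ofReal n := by
        calc L y = ENNReal.ofReal (L y).toReal := (ENNReal.ofReal_toReal hy).symm
          _ ≤ ENNReal.ofReal n := ENNReal.ofReal_le_ofReal (by rw [hn]; linarith)
      calc ENNReal.ofReal n⁻¹ * L y ≤ ENNReal.ofReal n⁻¹ * ENNReal.ofReal n :=
            mul_le_mul_right h1 _
        _ = ENNReal.ofReal (n⁻¹ * n) := (ENNReal.ofReal_mul (le_of_lt (inv_pos.mpr hn0))).symm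
        _ = 1 := by rw [inv_mul_cancel₀ hn0.ne', ENNReal.ofReal_one]
    have h2 : |ξ (n⁻¹ • y)| ≤ L' ξ := hle ξ _ hmem
    have h3 : ξ (n⁻¹ • y) = n⁻¹ * ξ y := by
      rw [map_smul]; simp [smul_eq_mul]
    rw [h3, abs_mul, abs_of_pos (inv_pos.mpr hn0)] at h2
    have h4 : |ξ y| = n * (n⁻¹ * |ξ y|) := by field_simp
    rw [h4]
    calc n * (n⁻¹ * |ξ y|) ≤ n * L' ξ := by
          exact mul_le_mul_of_nonneg_left h2 (le_of_lt hn0)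
      _ = ((L y).toReal + 1) * L' ξ := by rw [hn]
  -- neighbourhoods in the ball topology
  have hnhds : ∀ ξ₀ : X →L[ℝ] ℝ,
      @nhds _ (ballTopology L') ξ₀ = ⨅ r ∈ Set.Ioi (0 : ℝ), 𝓟 {ξ | L' (ξ - ξ₀) < r} := by
    intro ξ₀
    unfold ballTopology
    rw [TopologicalSpace.nhds_generateFrom]
    apply le_antisymm
    · refine le_iInf₂ fun r hr => ?_
      refine iInf₂_le {ξ | L' (ξ - ξ₀) < r} ?_
      refine ⟨?_, ξ₀, r, rfl⟩
      show L' (ξ₀ - ξ₀) < r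
      rw [sub_self, hL'0]
      exact hr
    · refine le_iInf₂ fun s hs => ?_
      obtain ⟨hmem, c, r, rfl⟩ := hs
      have h0 : L' (ξ₀ - c) < r := hmem
      refine iInf₂_le_of_le (r - L' (ξ₀ - c)) (Set.mem_Ioi.mpr (by linarith)) ?_
      refine principal_mono.mpr fun ξ hξ => ?_
      have hξ' : L' (ξ - ξ₀) < r - L' (ξ₀ - c) := hξ
      show L' (ξ - c) < r
      have h1 : L' (ξ - c) ≤ L' (ξ - ξ₀) + L' (ξ₀ - c) := htri ξ ξ₀ c
      linarith
  -- directedness of the ball filter basis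
  have hdir : ∀ ξ₀ : X →L[ℝ] ℝ,
      DirectedOn ((fun r : ℝ => 𝓟 {ξ | L' (ξ - ξ₀) < r}) ⁻¹'o (· ≥ ·)) (Set.Ioi 0) := by
    intro ξ₀ r₁ hr₁ r₂ hr₂
    refine ⟨min r₁ r₂, Set.mem_Ioi.mpr (lt_min hr₁ hr₂), ?_, ?_⟩
    · refine principal_mono.mpr fun ξ hξ => ?_
      have h : L' (ξ - ξ₀) < min r₁ r₂ := hξ
      exact lt_of_lt_of_le h (min_le_left _ _)
    · refine principal_mono.mpr fun ξ hξ => ?_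
      have h : L' (ξ - ξ₀) < min r₁ r₂ := hξ
      exact lt_of_lt_of_le h (min_le_right _ _)
  have hIoi_ne : (Set.Ioi (0 : ℝ)).Nonempty := ⟨1, by norm_num⟩
  -- main topology equality
  refine TopologicalSpace.ext_nhds fun b => ?_
  have hξ₀B : (b : X →L[ℝ] ℝ) ∈ B := b.2
  set ξ₀ : X →L[ℝ] ℝ := (b : X →L[ℝ] ℝ) with hξ₀def
  rw [@nhds_induced _ _ (ballTopology L') _ b,
    @nhds_induced _ _ (TopologicalSpace.induced (fun ξ : X →L[ℝ] ℝ => (ξ : X → ℝ))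
      inferInstance) _ b,
    nhds_induced (fun ξ : X →L[ℝ] ℝ => (ξ : X → ℝ)) ξ₀, comap_comap, hnhds ξ₀, nhds_pi,
    Filter.pi]
  conv_rhs => rw [comap_iInf]
  simp only [comap_comap]
  apply le_antisymm
  · -- L'-topology is finer: weak-* neighbourhoods are L'-neighbourhoods on B
    refine le_iInf fun x => ?_
    refine Filter.le_def.mpr fun t ht => ?_
    obtain ⟨s, hs, hst⟩ := mem_comap.mp ht
    obtain ⟨ε, hε, hball⟩ := Metric.mem_nhds_iff.mp hs
    -- choose a finite-L approximant y of x
    obtain ⟨y, hy, hxy⟩ : ∃ y ∈ {x : X | L x < ⊤}, dist x y < ε / (8 * M) := by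
      have := Metric.dense_iff.mp hdense x (ε / (8 * M)) (by positivity)
      obtain ⟨y, hy1, hy2⟩ := this
      exact ⟨y, hy2, Metric.mem_ball'.mp hy1⟩
    set n : ℝ := (L y).toReal + 1 with hn
    have hn0 : 0 < n := by positivity
    set δ : ℝ := ε / (2 * n) with hδ
    have hδ0 : 0 < δ := by positivity
    refine mem_comap.mpr ⟨{ξ | L' (ξ - ξ₀) < δ}, ?_, ?_⟩
    · rw [mem_biInf_of_directed (hdir ξ₀) hIoi_ne]
      exact ⟨δ, Set.mem_Ioi.mpr hδ0, mem_principal_self _⟩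
    · intro b' hb'
      apply hst
      apply Set.mem_preimage.mpr
      apply hball
      rw [Metric.mem_ball]
      set ξ : X →L[ℝ] ℝ := (b' : X →L[ℝ] ℝ) with hξdef
      have hb'B : ξ ∈ B := b'.2
      have hL'small : L' (ξ - ξ₀) < δ := hb'
      have key : |ξ x - ξ₀ x| < ε := by
        have e1 : ξ x - ξ₀ x = (ξ - ξ₀) (x - y) + (ξ - ξ₀) y := by
          simp only [ContinuousLinearMap.sub_apply, map_sub]; ring
        have e2 : |(ξ - ξ₀) (x - y)| ≤ 2 * M * ‖x - y‖ := by
          calc |(ξ - ξ₀) (x - y)| ≤ ‖ξ - ξ₀‖ * ‖x - y‖ := (ξ - ξ₀).le_opNorm _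
            _ ≤ (‖ξ‖ + ‖ξ₀‖) * ‖x - y‖ :=
                mul_le_mul_of_nonneg_right (norm_sub_le _ _) (norm_nonneg _)
            _ ≤ 2 * M * ‖x - y‖ := by
                have h1 := hM ξ hb'B; have h2 := hM ξ₀ hξ₀B
                have h3 : ‖ξ‖ + ‖ξ₀‖ ≤ 2 * M := by linarith
                exact mul_le_mul_of_nonneg_right h3 (norm_nonneg _)
        have e3 : |(ξ - ξ₀) y| ≤ n * L' (ξ - ξ₀) := hfin (ξ - ξ₀) y (ne_of_lt hy)
        have e4 : ‖x - y‖ < ε / (8 * M) := by rwa [← dist_eq_norm]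
        have e5 : n * L' (ξ - ξ₀) < n * δ := by
          exact mul_lt_mul_of_pos_left hL'small hn0
        have e6 : n * δ = ε / 2 := by rw [hδ]; field_simp
        have h2M : (0:ℝ) < 2 * M := by positivity
        have hA : |(ξ - ξ₀) (x - y)| < 2 * M * (ε / (8 * M)) :=
          lt_of_le_of_lt e2 (mul_lt_mul_of_pos_left e4 h2M)
        have hB : |(ξ - ξ₀) y| < ε / 2 := by
          calc |(ξ - ξ₀) y| ≤ n * L' (ξ - ξ₀) := e3
            _ < n * δ := e5
            _ = ε / 2 := e6
        have habs : |ξ x - ξ₀ x| ≤ |(ξ - ξ₀) (x - y)| + |(ξ - ξ₀) y| := by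
          rw [e1]; exact abs_add_le _ _
        have hq : 2 * M * (ε / (8 * M)) = ε / 4 := by field_simp; ring
        linarith
      rw [Real.dist_eq]
      exact key
  · -- weak-* topology is finer on B: L'-balls are weak-* neighbourhoods
    refine Filter.le_def.mpr fun t ht => ?_
    obtain ⟨u, hu, hut⟩ := mem_comap.mp ht
    rw [mem_biInf_of_directed (hdir ξ₀) hIoi_ne] at hu
    obtain ⟨r, hr, hru⟩ := hu
    rw [mem_principal] at hru
    have hr0 : 0 < r := hr
    -- finite subcover of K by small norm balls
    set r' : ℝ := r / (8 * M) with hr'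
    have hr'0 : 0 < r' := by positivity
    obtain ⟨F, hF⟩ := hcompact.elim_finite_subcover (fun z : X => Metric.ball z r')
      (fun _ => Metric.isOpen_ball)
      (fun x hx => Set.mem_iUnion.mpr ⟨x, Metric.mem_ball_self hr'0⟩)
    refine mem_of_superset ?_ (Set.Subset.trans (Set.preimage_mono hru) hut)
    refine mem_iInf_of_iInter (Set.finite_mem_finset F)
      (V := fun i : (↑F : Set X) => {b' : B | |(b' : X →L[ℝ] ℝ) (i : X) - ξ₀ (i : X)| < r / 4})
      (fun i => ?_) ?_
    · refine mem_comap.mpr ⟨Metric.ball (ξ₀ (i : X)) (r / 4), Metric.ball_mem_nhds _ (by positivity), ?_⟩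
      intro b' hb'
      simpa [Real.dist_eq] using hb'
    · intro b' hb'
      simp only [Set.mem_iInter, Set.mem_setOf_eq] at hb'
      show L' ((b' : X →L[ℝ] ℝ) - ξ₀) < r
      set ξ : X →L[ℝ] ℝ := (b' : X →L[ℝ] ℝ) with hξdef
      have hξB : ξ ∈ B := b'.2
      have hbound : L' (ξ - ξ₀) ≤ r / 2 := by
        apply hsup_le
        intro x hx
        obtain ⟨i, hiF, hxi⟩ : ∃ i ∈ F, x ∈ Metric.ball i r' := by
          have := hF hx
          simpa using this
        have e2 : |(ξ - ξ₀) (x - i)| ≤ 2 * M * ‖x - i‖ := by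
          calc |(ξ - ξ₀) (x - i)| ≤ ‖ξ - ξ₀‖ * ‖x - i‖ := (ξ - ξ₀).le_opNorm _
            _ ≤ (‖ξ‖ + ‖ξ₀‖) * ‖x - i‖ :=
                mul_le_mul_of_nonneg_right (norm_sub_le _ _) (norm_nonneg _)
            _ ≤ 2 * M * ‖x - i‖ := by
                have h1 := hM ξ hξB; have h2 := hM ξ₀ hξ₀B
                have h3 : ‖ξ‖ + ‖ξ₀‖ ≤ 2 * M := by linarith
                exact mul_le_mul_of_nonneg_right h3 (norm_nonneg _)
        have e3 : |(ξ - ξ₀) i| < r / 4 := hb' ⟨i, hiF⟩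
        have e4 : ‖x - i‖ < r' := by rwa [Metric.mem_ball, dist_eq_norm] at hxi
        have e1 : (ξ - ξ₀) x = (ξ - ξ₀) (x - i) + (ξ - ξ₀) i := by
          simp [map_sub]
        calc |(ξ - ξ₀) x| ≤ |(ξ - ξ₀) (x - i)| + |(ξ - ξ₀) i| := by
              rw [e1]; exact abs_add_le _ _
          _ ≤ 2 * M * ‖x - i‖ + r / 4 := by linarith
          _ ≤ 2 * M * r' + r / 4 := by
              have := mul_le_mul_of_nonneg_left e4.le (by positivity : (0:ℝ) ≤ 2 * M)
              linarith
          _ ≤ r / 2 := by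
              have hq : 2 * M * r' = r / 4 := by rw [hr']; field_simp; ring
              linarith
      linarith
end

section
/- The dual quantum Gromov–Hausdorff distance satisfies the triangle inequality: for Lip-von Neumann algebras M₁, M₂, M₃, dist_{qGH*}(M₁, M₃) ≤ dist_{qGH*}(M₁, M₂) + dist_{qGH*}(M₂, M₃). -/
open Filter Topology

/-- A dual-Lip-norm on (the underlying space of) a von Neumann algebra `M`: a norm making the
unit ball of `M` compact in the induced topology (equivalently, inducing the weak* topology on
bounded subsets). -/
def IsDualLipNorm {M : Type*} [NormedRing M] [NormedAlgebra ℂ M] (L : M → ℝ) : Prop :=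
  (∀ x, 0 ≤ L x) ∧ (∀ x y, L (x + y) ≤ L x + L y) ∧
    (∀ (c : ℂ) (x : M), L (c • x) = ‖c‖ * L x) ∧ (∀ x, L x = 0 → x = 0) ∧
    @IsCompact M (ballTopology L) {x | ‖x‖ ≤ 1}

/-- Positivity in a `*`-ring: `a` is positive iff it is of the form `b* b`. -/
def IsPos {A : Type*} [Ring A] [StarRing A] (a : A) : Prop := ∃ b, a = star b * b

/-- The positive part `X_M` of the unit ball of the 2×2 matrices over `A`:
the elements `a` with `0 ≤ a ≤ 1`. -/
def posUnitBall (A : Type*) [Ring A] [StarRing A] : Set (Matrix (Fin 2) (Fin 2) A) :=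
  {a | IsPos a ∧ IsPos (1 - a)}

/-- The unit ball of the 2×2 matrices over a unital C*-algebra `A`, characterized
algebraically: `‖a‖ ≤ 1` iff `1 - a* a ≥ 0`. -/
def matUnitBall (A : Type*) [Ring A] [StarRing A] : Set (Matrix (Fin 2) (Fin 2) A) :=
  {a | IsPos (1 - star a * a)}

/-- The lift of a (semi)norm to 2×2 matrices: the max over the entries. -/
noncomputable def matLift {A : Type*} (L : A → ℝ) (a : Matrix (Fin 2) (Fin 2) A) : ℝ :=
  max (max (L (a 0 0)) (L (a 0 1))) (max (L (a 1 0)) (L (a 1 1)))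

/-- The Hausdorff distance between two subsets w.r.t. a seminorm `L`. -/
noncomputable def seminormHausdorffDist {Z : Type*} [AddGroup Z] (L : Z → ℝ)
    (A B : Set Z) : ℝ :=
  max (⨆ x : A, ⨅ y : B, L ((x : Z) - (y : Z))) (⨆ y : B, ⨅ x : A, L ((x : Z) - (y : Z)))

/-- The set `𝓛(M,N)` of admissible seminorms on `M ⊕ N`, i.e. seminorms restricting to `LM` on
`M ⊕ {0}` and to `LN` on `{0} ⊕ N`. -/
def admissible {M N : Type*} [Ring M] [Algebra ℂ M] [Ring N] [Algebra ℂ N]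
    (LM : M → ℝ) (LN : N → ℝ) : Set (M × N → ℝ) :=
  {L | (∀ z, 0 ≤ L z) ∧ (∀ z w, L (z + w) ≤ L z + L w) ∧
    (∀ (c : ℂ) (z : M × N), L (c • z) = ‖c‖ * L z) ∧
    (∀ x : M, L (x, 0) = LM x) ∧ (∀ y : N, L (0, y) = LN y)}

/-- The entrywise embedding of `M₂(M)` into `M₂(M ⊕ N)`. -/
def embL {M N : Type*} [Zero N] (a : Matrix (Fin 2) (Fin 2) M) :
    Matrix (Fin 2) (Fin 2) (M × N) := a.map fun x => (x, 0)

/-- The entrywise embedding of `M₂(N)` into `M₂(M ⊕ N)`. -/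
def embR {M N : Type*} [Zero M] (b : Matrix (Fin 2) (Fin 2) N) :
    Matrix (Fin 2) (Fin 2) (M × N) := b.map fun y => ((0 : M), y)

/-- The dual quantum Gromov–Hausdorff distance between `(M, LM)` and `(N, LN)`: the infimum,
over admissible seminorms `L` on `M ⊕ N`, of the Hausdorff distance w.r.t. the lift of `L` to
2×2 matrices between the positive parts of the unit balls of `M₂(M)` and `M₂(N)`. -/
noncomputable def distqGH {M N : Type*} [NormedRing M] [NormedAlgebra ℂ M] [StarRing M]
    [NormedRing N] [NormedAlgebra ℂ N] [StarRing N] (LM : M → ℝ) (LN : N → ℝ) : ℝ :=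
  sInf {d | ∃ L ∈ admissible LM LN,
    d = seminormHausdorffDist (matLift L)
      (embL (N := N) '' posUnitBall M) (embR (M := M) '' posUnitBall N)}

/-- The radius of a Lip-von Neumann algebra: the sup of the Lip-norm over the unit ball. -/
noncomputable def lipRadius {M : Type*} [NormedRing M] (L : M → ℝ) : ℝ :=
  sSup {r | ∃ x : M, ‖x‖ ≤ 1 ∧ r = L x}

/-!
Given admissible seminorms `L₁₂` and `L₂₃`, the inf-convolution
`L₁₃ (x₁, x₃) = ⨅ x₂, L₁₂ (x₁, -x₂) + L₂₃ (x₂, x₃)` is admissible for `(L₁, L₃)`, and entrywise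
`L₁₃ (a - c) ≤ L₁₂ (a - b) + L₂₃ (b - c)`. Chaining a point of `X_{M₁}` to a near point of
`X_{M₂}` and that one to a near point of `X_{M₃}` (and back) bounds the Hausdorff distance for
`L₁₃` by the sum of the two given ones; taking infima gives the triangle inequality.

Extracting near points needs the suprema in `seminormHausdorffDist` to be bounded (an unbounded
real `⨆` is `0`). This comes from the Lip-norms being bounded on the unit ball (a compact set on
which a Lip-norm is upper semicontinuous) and from `‖a i j‖ ≤ 2` whenever `0 ≤ a ≤ 1` in `M₂(M)`.
-/

open Set

lemma upperSemicontinuous_ballTopology {E : Type*} [AddGroup E] (L : E → ℝ) :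
    @UpperSemicontinuous E ℝ (ballTopology L) _ L :=
  (@upperSemicontinuous_iff_isOpen_preimage E ℝ (ballTopology L) _ (f := L)).2 fun r =>
    TopologicalSpace.isOpen_generateFrom_of_mem ⟨0, r, by simp [Set.preimage, Iio]⟩

lemma IsDualLipNorm.bddAbove_image_norm_le_one {M : Type*} [NormedRing M] [NormedAlgebra ℂ M]
    {L : M → ℝ} (hL : IsDualLipNorm L) : BddAbove (L '' {x | ‖x‖ ≤ 1}) := by
  let _ := ballTopology L
  exact UpperSemicontinuousOn.bddAbove_of_isCompact hL.2.2.2.2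
    ((upperSemicontinuous_ballTopology L).upperSemicontinuousOn _)

lemma zero_mem_posUnitBall (A : Type*) [Ring A] [StarRing A] :
    (0 : Matrix (Fin 2) (Fin 2) A) ∈ posUnitBall A :=
  ⟨⟨0, by simp⟩, ⟨1, by simp⟩⟩

lemma Matrix.star_mul_self_apply {A : Type*} [Ring A] [StarRing A] (b : Matrix (Fin 2) (Fin 2) A)
    (i j : Fin 2) : (star b * b) i j = ∑ k, star (b k i) * b k j := by
  simp [Matrix.mul_apply, Matrix.star_apply]

lemma star_mul_self_apply_le_one_of_mem_posUnitBall {A : Type*} [Ring A] [StarRing A]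
    [PartialOrder A] [StarOrderedRing A] {a b : Matrix (Fin 2) (Fin 2) A}
    (ha : a ∈ posUnitBall A) (hab : a = star b * b) (k i : Fin 2) :
    star (b k i) * b k i ≤ 1 := by
  obtain ⟨c, hc⟩ := ha.2
  have hdiag : (∑ l, star (b l i) * b l i) + ∑ l, star (c l i) * c l i = 1 := by
    rw [← Matrix.star_mul_self_apply, ← Matrix.star_mul_self_apply, ← hab, ← hc, ← Matrix.add_apply,
      add_sub_cancel, Matrix.one_apply_eq]
  calc star (b k i) * b k i ≤ ∑ l, star (b l i) * b l i :=
        Finset.single_le_sum (fun l _ => star_mul_self_nonneg (b l i)) (Finset.mem_univ k)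
    _ ≤ 1 := hdiag ▸ le_add_of_nonneg_right
        (Finset.sum_nonneg fun l _ => star_mul_self_nonneg (c l i))

lemma norm_apply_le_two_of_mem_posUnitBall {A : Type*} [CStarAlgebra A] [PartialOrder A]
    [StarOrderedRing A] {a : Matrix (Fin 2) (Fin 2) A} (ha : a ∈ posUnitBall A) (i j : Fin 2) :
    ‖a i j‖ ≤ 2 := by
  obtain ⟨b, hab⟩ := ha.1
  have hb : ∀ k l, ‖b k l‖ ≤ 1 := fun k l => by
    have h := (CStarAlgebra.norm_le_one_iff_of_nonneg _ (star_mul_self_nonneg (b k l))).2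
      (star_mul_self_apply_le_one_of_mem_posUnitBall ha hab k l)
    rw [CStarRing.norm_star_mul_self] at h
    nlinarith [norm_nonneg (b k l)]
  rw [hab, Matrix.star_mul_self_apply, Fin.sum_univ_two]
  calc ‖star (b 0 i) * b 0 j + star (b 1 i) * b 1 j‖
      ≤ ‖b 0 i‖ * ‖b 0 j‖ + ‖b 1 i‖ * ‖b 1 j‖ := by
        refine (norm_add_le _ _).trans (add_le_add ?_ ?_) <;>
          exact (norm_mul_le _ _).trans_eq (by rw [norm_star])
    _ ≤ 1 * 1 + 1 * 1 := by gcongr <;> apply hb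
    _ = 2 := by norm_num

section matLift

variable {A : Type*} {L : A → ℝ} {x : Matrix (Fin 2) (Fin 2) A}

lemma matLift_le_iff {r : ℝ} : matLift L x ≤ r ↔ ∀ i j, L (x i j) ≤ r := by
  simp only [matLift, max_le_iff, Fin.forall_fin_two]

lemma le_matLift (i j : Fin 2) : L (x i j) ≤ matLift L x :=
  matLift_le_iff.1 le_rfl i j

lemma matLift_nonneg (hL : ∀ z, 0 ≤ L z) : 0 ≤ matLift L x :=
  (hL _).trans (le_matLift 0 0)

end matLift

lemma IsDualLipNorm.bddAbove_matLift_posUnitBall {M : Type*} [NormedRing M] [NormedAlgebra ℂ M]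
    [StarRing M] [CStarRing M] [StarModule ℂ M] [CompleteSpace M] {L : M → ℝ}
    (hL : IsDualLipNorm L) : BddAbove (matLift L '' posUnitBall M) := by
  let _ : CStarAlgebra M :=
    { ‹NormedRing M›, ‹StarRing M›, ‹CStarRing M›, ‹NormedAlgebra ℂ M›, ‹StarModule ℂ M›,
      ‹CompleteSpace M› with }
  let _ := CStarAlgebra.spectralOrder M
  have := CStarAlgebra.spectralOrderedRing M
  obtain ⟨C, hC⟩ := hL.bddAbove_image_norm_le_one
  refine ⟨2 * C, ?_⟩
  rintro _ ⟨a, ha, rfl⟩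
  refine matLift_le_iff.2 fun i j => ?_
  have h_half : ‖(2⁻¹ : ℂ) • a i j‖ ≤ 1 := by
    rw [norm_smul, norm_inv, Complex.norm_two]
    linarith [norm_apply_le_two_of_mem_posUnitBall ha i j]
  calc L (a i j) = ‖(2 : ℂ)‖ * L ((2⁻¹ : ℂ) • a i j) := by
        rw [← hL.2.2.1, smul_inv_smul₀ two_ne_zero]
    _ ≤ 2 * C := by
        rw [Complex.norm_two]
        linarith [hC ⟨_, h_half, rfl⟩]

lemma embL_sub_embR_apply {M N : Type*} [AddGroup M] [AddGroup N] (a : Matrix (Fin 2) (Fin 2) M)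
    (b : Matrix (Fin 2) (Fin 2) N) (i j : Fin 2) :
    (embL (N := N) a - embR (M := M) b) i j = (a i j, -b i j) := by
  simp [embL, embR]

section admissible

variable {M N : Type*} [Ring M] [Algebra ℂ M] [Ring N] [Algebra ℂ N]
  {LM : M → ℝ} {LN : N → ℝ} {L : M × N → ℝ}

lemma apply_zero_of_mem_admissible (hL : L ∈ admissible LM LN) : L 0 = 0 := by
  simpa using hL.2.2.1 0 0

lemma apply_neg_of_mem_admissible (hL : L ∈ admissible LM LN) (z : M × N) : L (-z) = L z := by
  simpa using hL.2.2.1 (-1) z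

lemma matLift_embL (hL : L ∈ admissible LM LN) (a : Matrix (Fin 2) (Fin 2) M) :
    matLift L (embL a) = matLift LM a := by
  simp [matLift, embL, hL.2.2.2.1]

lemma matLift_embR (hL : L ∈ admissible LM LN) (b : Matrix (Fin 2) (Fin 2) N) :
    matLift L (embR b) = matLift LN b := by
  simp [matLift, embR, hL.2.2.2.2]

end admissible

lemma add_mem_admissible {M N : Type*} [NormedRing M] [NormedAlgebra ℂ M] [NormedRing N]
    [NormedAlgebra ℂ N] {LM : M → ℝ} {LN : N → ℝ} (hM : IsDualLipNorm LM)
    (hN : IsDualLipNorm LN) : (fun z : M × N => LM z.1 + LN z.2) ∈ admissible LM LN := by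
  have hM0 : LM 0 = 0 := by simpa using hM.2.2.1 0 0
  have hN0 : LN 0 = 0 := by simpa using hN.2.2.1 0 0
  refine ⟨fun z => add_nonneg (hM.1 _) (hN.1 _), fun z w => ?_, fun c z => ?_,
    fun x => by simp [hN0], fun y => by simp [hM0]⟩
  · simp only [Prod.fst_add, Prod.snd_add]
    linarith [hM.2.1 z.1 w.1, hN.2.1 z.2 w.2]
  · simp only [Prod.smul_fst, Prod.smul_snd, hM.2.2.1, hN.2.2.1, mul_add]

section seminormHausdorffDist

variable {Z : Type*} [AddGroup Z] {L : Z → ℝ} {A B : Set Z}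

lemma seminormHausdorffDist_nonneg (hL : ∀ z, 0 ≤ L z) : 0 ≤ seminormHausdorffDist L A B :=
  le_max_of_le_left (Real.iSup_nonneg fun _ => Real.iInf_nonneg fun _ => hL _)

lemma seminormHausdorffDist_le (hL : ∀ z, 0 ≤ L z) {r : ℝ} (hr : 0 ≤ r)
    (hA : ∀ x ∈ A, ∀ ε > 0, ∃ y ∈ B, L (x - y) ≤ r + ε)
    (hB : ∀ y ∈ B, ∀ ε > 0, ∃ x ∈ A, L (x - y) ≤ r + ε) :
    seminormHausdorffDist L A B ≤ r := by
  refine max_le (Real.iSup_le (fun x => le_of_forall_pos_le_add fun ε hε => ?_) hr)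
    (Real.iSup_le (fun y => le_of_forall_pos_le_add fun ε hε => ?_) hr)
  · obtain ⟨y, hy, hxy⟩ := hA x x.2 ε hε
    exact (ciInf_le ⟨0, by rintro _ ⟨_, rfl⟩; exact hL _⟩ (⟨y, hy⟩ : B)).trans hxy
  · obtain ⟨x, hx, hxy⟩ := hB y y.2 ε hε
    exact (ciInf_le ⟨0, by rintro _ ⟨_, rfl⟩; exact hL _⟩ (⟨x, hx⟩ : A)).trans hxy

lemma exists_sub_lt_seminormHausdorffDist_add_left (hL : ∀ z, 0 ≤ L z) (hB : 0 ∈ B)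
    (hA : BddAbove (L '' A)) {x : Z} (hx : x ∈ A) {ε : ℝ} (hε : 0 < ε) :
    ∃ y ∈ B, L (x - y) < seminormHausdorffDist L A B + ε := by
  have : Nonempty B := ⟨⟨0, hB⟩⟩
  obtain ⟨C, hC⟩ := hA
  have hbdd : BddAbove (range fun x : A => ⨅ y : B, L (x - y)) := by
    refine ⟨C, ?_⟩
    rintro _ ⟨x, rfl⟩
    refine (ciInf_le ⟨0, ?_⟩ ⟨0, hB⟩).trans ?_
    · rintro _ ⟨_, rfl⟩; exact hL _
    · simpa using hC ⟨x, x.2, rfl⟩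
  obtain ⟨y, hy⟩ := exists_lt_of_ciInf_lt <|
    ((le_ciSup hbdd ⟨x, hx⟩).trans (le_max_left _ _)).trans_lt (lt_add_of_pos_right _ hε)
  exact ⟨y, y.2, hy⟩

lemma exists_sub_lt_seminormHausdorffDist_add_right (hL : ∀ z, 0 ≤ L z)
    (hneg : ∀ z, L (-z) = L z) (hA : 0 ∈ A) (hB : BddAbove (L '' B)) {y : Z} (hy : y ∈ B) {ε : ℝ} (hε : 0 < ε) :
    ∃ x ∈ A, L (x - y) < seminormHausdorffDist L A B + ε := by
  have : Nonempty A := ⟨⟨0, hA⟩⟩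
  obtain ⟨C, hC⟩ := hB
  have hbdd : BddAbove (range fun y : B => ⨅ x : A, L (x - y)) := by
    refine ⟨C, ?_⟩
    rintro _ ⟨y, rfl⟩
    refine (ciInf_le ⟨0, ?_⟩ ⟨0, hA⟩).trans ?_
    · rintro _ ⟨_, rfl⟩; exact hL _
    · simpa [hneg] using hC ⟨y, y.2, rfl⟩
  obtain ⟨x, hx⟩ := exists_lt_of_ciInf_lt <|
    ((le_ciSup hbdd ⟨y, hy⟩).trans (le_max_right _ _)).trans_lt (lt_add_of_pos_right _ hε)
  exact ⟨x, x.2, hx⟩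

end seminormHausdorffDist

section matHausdorffDist

variable {M N : Type*} [Ring M] [Algebra ℂ M] [StarRing M] [Ring N] [Algebra ℂ N] [StarRing N]
  {LM : M → ℝ} {LN : N → ℝ} {L : M × N → ℝ}

noncomputable def matHausdorffDist (L : M × N → ℝ) : ℝ :=
  seminormHausdorffDist (matLift L) (embL (N := N) '' posUnitBall M)
    (embR (M := M) '' posUnitBall N)

lemma matHausdorffDist_nonneg (hL : L ∈ admissible LM LN) : 0 ≤ matHausdorffDist L :=
  seminormHausdorffDist_nonneg fun _ => matLift_nonneg hL.1

lemma exists_matLift_sub_lt_matHausdorffDist_add_left (hL : L ∈ admissible LM LN)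
    (hM : BddAbove (matLift LM '' posUnitBall M)) {a : Matrix (Fin 2) (Fin 2) M}
    (ha : a ∈ posUnitBall M) {ε : ℝ} (hε : 0 < ε) :
    ∃ b ∈ posUnitBall N, matLift L (embL a - embR b) < matHausdorffDist L + ε := by
  have h0 : (0 : Matrix (Fin 2) (Fin 2) (M × N)) ∈ embR '' posUnitBall N :=
    ⟨0, zero_mem_posUnitBall N, Matrix.map_zero _ rfl⟩
  have hbdd : BddAbove (matLift L '' (embL '' posUnitBall M)) := by
    rwa [image_image, funext (matLift_embL hL)]
  obtain ⟨_, ⟨b, hb, rfl⟩, hab⟩ := exists_sub_lt_seminormHausdorffDist_add_left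
    (fun _ => matLift_nonneg hL.1) h0 hbdd ⟨a, ha, rfl⟩ hε
  exact ⟨b, hb, hab⟩

lemma exists_matLift_sub_lt_matHausdorffDist_add_right (hL : L ∈ admissible LM LN)
    (hN : BddAbove (matLift LN '' posUnitBall N)) {b : Matrix (Fin 2) (Fin 2) N}
    (hb : b ∈ posUnitBall N) {ε : ℝ} (hε : 0 < ε) :
    ∃ a ∈ posUnitBall M, matLift L (embL a - embR b) < matHausdorffDist L + ε := by
  have h0 : (0 : Matrix (Fin 2) (Fin 2) (M × N)) ∈ embL '' posUnitBall M :=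
    ⟨0, zero_mem_posUnitBall M, Matrix.map_zero _ rfl⟩
  have hbdd : BddAbove (matLift L '' (embR '' posUnitBall N)) := by
    rwa [image_image, funext (matLift_embR hL)]
  have hneg (x : Matrix (Fin 2) (Fin 2) (M × N)) : matLift L (-x) = matLift L x := by
    simp [matLift, apply_neg_of_mem_admissible hL]
  obtain ⟨_, ⟨a, ha, rfl⟩, hab⟩ := exists_sub_lt_seminormHausdorffDist_add_right
    (fun _ => matLift_nonneg hL.1) hneg h0 hbdd ⟨b, hb, rfl⟩ hε
  exact ⟨a, ha, hab⟩

end matHausdorffDist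

lemma distqGH_eq_iInf {M N : Type*} [NormedRing M] [NormedAlgebra ℂ M] [StarRing M]
    [NormedRing N] [NormedAlgebra ℂ N] [StarRing N] (LM : M → ℝ) (LN : N → ℝ) :
    distqGH LM LN = ⨅ L : admissible LM LN, matHausdorffDist L.1 := by
  rw [distqGH, ← sInf_image']
  congr 1
  ext d
  simp [matHausdorffDist, eq_comm]

section infConv

variable {M₁ M₂ M₃ : Type*} [Ring M₁] [Algebra ℂ M₁] [Ring M₂] [Algebra ℂ M₂]
  [Ring M₃] [Algebra ℂ M₃] {L₁ : M₁ → ℝ} {L₂ : M₂ → ℝ} {L₃ : M₃ → ℝ}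
  {L₁₂ : M₁ × M₂ → ℝ} {L₂₃ : M₂ × M₃ → ℝ}

noncomputable def infConv (L₁₂ : M₁ × M₂ → ℝ) (L₂₃ : M₂ × M₃ → ℝ) (z : M₁ × M₃) : ℝ :=
  ⨅ x₂ : M₂, L₁₂ (z.1, -x₂) + L₂₃ (x₂, z.2)

lemma infConv_le (h12 : L₁₂ ∈ admissible L₁ L₂) (h23 : L₂₃ ∈ admissible L₂ L₃)
    (z : M₁ × M₃) (x₂ : M₂) : infConv L₁₂ L₂₃ z ≤ L₁₂ (z.1, -x₂) + L₂₃ (x₂, z.2) :=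
  ciInf_le ⟨0, by rintro _ ⟨_, rfl⟩; exact add_nonneg (h12.1 _) (h23.1 _)⟩ x₂

lemma infConv_nonneg (h12 : L₁₂ ∈ admissible L₁ L₂) (h23 : L₂₃ ∈ admissible L₂ L₃)
    (z : M₁ × M₃) : 0 ≤ infConv L₁₂ L₂₃ z :=
  Real.iInf_nonneg fun _ => add_nonneg (h12.1 _) (h23.1 _)

lemma infConv_add_le (h12 : L₁₂ ∈ admissible L₁ L₂) (h23 : L₂₃ ∈ admissible L₂ L₃)
    (z w : M₁ × M₃) : infConv L₁₂ L₂₃ (z + w) ≤ infConv L₁₂ L₂₃ z + infConv L₁₂ L₂₃ w := by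
  refine le_ciInf_add_ciInf fun x₂ y₂ => (infConv_le h12 h23 _ (x₂ + y₂)).trans ?_
  have h1 := h12.2.1 (z.1, -x₂) (w.1, -y₂)
  have h2 := h23.2.1 (x₂, z.2) (y₂, w.2)
  simp only [Prod.mk_add_mk, Prod.fst_add, Prod.snd_add, neg_add] at h1 h2 ⊢
  linarith

lemma infConv_smul_le (h12 : L₁₂ ∈ admissible L₁ L₂) (h23 : L₂₃ ∈ admissible L₂ L₃)
    (c : ℂ) (z : M₁ × M₃) : infConv L₁₂ L₂₃ (c • z) ≤ ‖c‖ * infConv L₁₂ L₂₃ z := by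
  unfold infConv
  rw [Real.mul_iInf_of_nonneg (norm_nonneg c)]
  refine le_ciInf fun x₂ => (infConv_le h12 h23 _ (c • x₂)).trans_eq ?_
  rw [mul_add, ← h12.2.2.1, ← h23.2.2.1]
  simp [smul_neg]

lemma infConv_smul (h12 : L₁₂ ∈ admissible L₁ L₂) (h23 : L₂₃ ∈ admissible L₂ L₃)
    (c : ℂ) (z : M₁ × M₃) : infConv L₁₂ L₂₃ (c • z) = ‖c‖ * infConv L₁₂ L₂₃ z := by
  refine le_antisymm (infConv_smul_le h12 h23 c z) ?_
  rcases eq_or_ne c 0 with rfl | hc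
  · simpa using infConv_nonneg h12 h23 0
  calc ‖c‖ * infConv L₁₂ L₂₃ z = ‖c‖ * infConv L₁₂ L₂₃ (c⁻¹ • c • z) := by
        rw [inv_smul_smul₀ hc]
    _ ≤ ‖c‖ * (‖c⁻¹‖ * infConv L₁₂ L₂₃ (c • z)) := by
        gcongr
        exact infConv_smul_le h12 h23 _ _
    _ = infConv L₁₂ L₂₃ (c • z) := by
        rw [norm_inv, ← mul_assoc, mul_inv_cancel₀ (norm_ne_zero_iff.2 hc), one_mul]

lemma infConv_apply_left (h12 : L₁₂ ∈ admissible L₁ L₂) (h23 : L₂₃ ∈ admissible L₂ L₃)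
    (x : M₁) : infConv L₁₂ L₂₃ (x, 0) = L₁ x := by
  refine le_antisymm ?_ (le_ciInf fun x₂ => ?_)
  · simpa [h12.2.2.2.1, Prod.mk_zero_zero, apply_zero_of_mem_admissible h23]
      using infConv_le h12 h23 (x, 0) 0
  · show L₁ x ≤ L₁₂ (x, -x₂) + L₂₃ (x₂, 0)
    have h := h12.2.1 (x, -x₂) (0, x₂)
    rwa [Prod.mk_add_mk, add_zero, neg_add_cancel, h12.2.2.2.1, h12.2.2.2.2,
      ← h23.2.2.2.1] at h

lemma infConv_apply_right (h12 : L₁₂ ∈ admissible L₁ L₂) (h23 : L₂₃ ∈ admissible L₂ L₃)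
    (y : M₃) : infConv L₁₂ L₂₃ (0, y) = L₃ y := by
  refine le_antisymm ?_ (le_ciInf fun x₂ => ?_)
  · simpa [h23.2.2.2.2, Prod.mk_zero_zero, apply_zero_of_mem_admissible h12]
      using infConv_le h12 h23 (0, y) 0
  · show L₃ y ≤ L₁₂ (0, -x₂) + L₂₃ (x₂, y)
    have h := h23.2.1 (-x₂, 0) (x₂, y)
    rwa [Prod.mk_add_mk, zero_add, neg_add_cancel, h23.2.2.2.2, h23.2.2.2.1,
      ← h12.2.2.2.2] at h

lemma infConv_mem_admissible (h12 : L₁₂ ∈ admissible L₁ L₂) (h23 : L₂₃ ∈ admissible L₂ L₃) :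
    infConv L₁₂ L₂₃ ∈ admissible L₁ L₃ :=
  ⟨infConv_nonneg h12 h23, infConv_add_le h12 h23, infConv_smul h12 h23,
    infConv_apply_left h12 h23, infConv_apply_right h12 h23⟩

lemma matLift_infConv_le (h12 : L₁₂ ∈ admissible L₁ L₂) (h23 : L₂₃ ∈ admissible L₂ L₃)
    (a : Matrix (Fin 2) (Fin 2) M₁) (b : Matrix (Fin 2) (Fin 2) M₂)
    (c : Matrix (Fin 2) (Fin 2) M₃) :
    matLift (infConv L₁₂ L₂₃) (embL a - embR c) ≤
      matLift L₁₂ (embL a - embR b) + matLift L₂₃ (embL b - embR c) := by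
  refine matLift_le_iff.2 fun i j => ?_
  have h := infConv_le h12 h23 (a i j, -c i j) (b i j)
  rw [embL_sub_embR_apply]
  rw [← embL_sub_embR_apply a b, ← embL_sub_embR_apply b c] at h
  exact h.trans (add_le_add (le_matLift i j) (le_matLift i j))

lemma matHausdorffDist_infConv_le [StarRing M₁] [StarRing M₂] [StarRing M₃]
    (h12 : L₁₂ ∈ admissible L₁ L₂) (h23 : L₂₃ ∈ admissible L₂ L₃)
    (hb₁ : BddAbove (matLift L₁ '' posUnitBall M₁))
    (hb₂ : BddAbove (matLift L₂ '' posUnitBall M₂))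
    (hb₃ : BddAbove (matLift L₃ '' posUnitBall M₃)) :
    matHausdorffDist (infConv L₁₂ L₂₃) ≤ matHausdorffDist L₁₂ + matHausdorffDist L₂₃ := by
  refine seminormHausdorffDist_le (fun _ => matLift_nonneg (infConv_nonneg h12 h23))
    (add_nonneg (matHausdorffDist_nonneg h12) (matHausdorffDist_nonneg h23)) ?_ ?_
  · rintro _ ⟨a, ha, rfl⟩ ε hε
    obtain ⟨b, hb, hab⟩ := exists_matLift_sub_lt_matHausdorffDist_add_left h12 hb₁ ha (half_pos hε)
    obtain ⟨c, hc, hbc⟩ := exists_matLift_sub_lt_matHausdorffDist_add_left h23 hb₂ hb (half_pos hε)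
    exact ⟨embR c, ⟨c, hc, rfl⟩, by linarith [matLift_infConv_le h12 h23 a b c]⟩
  · rintro _ ⟨c, hc, rfl⟩ ε hε
    obtain ⟨b, hb, hbc⟩ := exists_matLift_sub_lt_matHausdorffDist_add_right h23 hb₃ hc (half_pos hε)
    obtain ⟨a, ha, hab⟩ := exists_matLift_sub_lt_matHausdorffDist_add_right h12 hb₂ hb (half_pos hε)
    exact ⟨embL a, ⟨a, ha, rfl⟩, by linarith [matLift_infConv_le h12 h23 a b c]⟩

end infConv

/-- The dual quantum Gromov–Hausdorff distance satisfies the triangle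
inequality: for Lip-von Neumann algebras `M₁`, `M₂`, `M₃`,
`dist_{qGH*}(M₁,M₃) ≤ dist_{qGH*}(M₁,M₂) + dist_{qGH*}(M₂,M₃)`. -/
theorem stmt7 {M₁ M₂ M₃ : Type*}
    [NormedRing M₁] [NormedAlgebra ℂ M₁] [StarRing M₁] [CStarRing M₁] [StarModule ℂ M₁]
    [CompleteSpace M₁]
    [NormedRing M₂] [NormedAlgebra ℂ M₂] [StarRing M₂] [CStarRing M₂] [StarModule ℂ M₂]
    [CompleteSpace M₂]
    [NormedRing M₃] [NormedAlgebra ℂ M₃] [StarRing M₃] [CStarRing M₃] [StarModule ℂ M₃]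
    [CompleteSpace M₃]
    (L₁ : M₁ → ℝ) (L₂ : M₂ → ℝ) (L₃ : M₃ → ℝ)
    (h₁ : IsDualLipNorm L₁) (h₂ : IsDualLipNorm L₂) (h₃ : IsDualLipNorm L₃) :
    distqGH L₁ L₃ ≤ distqGH L₁ L₂ + distqGH L₂ L₃ := by
  have : Nonempty (admissible L₁ L₂) := ⟨⟨_, add_mem_admissible h₁ h₂⟩⟩
  have : Nonempty (admissible L₂ L₃) := ⟨⟨_, add_mem_admissible h₂ h₃⟩⟩
  rw [distqGH_eq_iInf, distqGH_eq_iInf, distqGH_eq_iInf]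
  refine le_ciInf_add_ciInf fun L₁₂ L₂₃ => ?_
  have h13 := infConv_mem_admissible L₁₂.2 L₂₃.2
  have hle := matHausdorffDist_infConv_le L₁₂.2 L₂₃.2 h₁.bddAbove_matLift_posUnitBall
    h₂.bddAbove_matLift_posUnitBall h₃.bddAbove_matLift_posUnitBall
  have hbdd : BddBelow (range fun L : admissible L₁ L₃ => matHausdorffDist L.1) :=
    ⟨0, by rintro _ ⟨L, rfl⟩; exact matHausdorffDist_nonneg L.2⟩
  exact (ciInf_le hbdd ⟨_, h13⟩).trans hle
end

section
/- Let L₁₂ be a seminorm on M₁ ⊕ M₂ restricting to L₁ on M₁⊕{0} and L₂ on {0}⊕M₂, and L₂₃ a seminorm on M₂ ⊕ M₃ restricting to L₂ and L₃. Then L₁₃(x₁, x₃) := inf_{x₂ ∈ M₂}( L₁₂(x₁, −x₂) + L₂₃(x₂, x₃) ) defines a seminorm on M₁ ⊕ M₃ with L₁₃(x₁, 0) = L₁(x₁) and L₁₃(0, x₃) = L₃(x₃). -/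
/-! Write `q((x₁, x₃), x₂) = L₁₂(x₁, -x₂) + L₂₃(x₂, x₃)`, a seminorm on `(M₁ × M₃) × M₂`; then
`L₁₃` is its infimum over the fibres of the projection to `M₁ × M₃`, and such an infimum of a
seminorm is again a seminorm. For the restrictions, `x₂ = 0` gives `L₁₃(x₁, 0) ≤ L₁(x₁)`, while
`L₂₃(x₂, 0) = L₂(x₂) = L₁₂(0, x₂)` and the triangle inequality for `L₁₂` give
`L₁₂(x₁, -x₂) + L₂₃(x₂, 0) ≥ L₁₂(x₁, 0)`; symmetrically for `L₃`. -/

namespace Seminorm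

variable {𝕜 E F G : Type*} [NormedField 𝕜]
  [AddCommGroup E] [Module 𝕜 E] [AddCommGroup F] [Module 𝕜 F] [AddCommGroup G] [Module 𝕜 G]

noncomputable def iInfSnd (q : Seminorm 𝕜 (E × F)) : Seminorm 𝕜 E :=
  have hbdd (x : E) : BddBelow (Set.range fun y => q (x, y)) :=
    ⟨0, Set.forall_mem_range.2 fun _ => apply_nonneg q _⟩
  Seminorm.ofSMulLE (fun x => ⨅ y, q (x, y))
    (le_antisymm (ciInf_le_of_le (hbdd 0) 0 (map_zero q).le) (le_ciInf fun _ => apply_nonneg q _))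
    (fun x x' => le_ciInf_add_ciInf fun y y' =>
      ciInf_le_of_le (hbdd _) (y + y') (map_add_le_add q (x, y) (x', y')))
    (fun c x => by
      rw [Real.mul_iInf_of_nonneg (norm_nonneg c)]
      exact le_ciInf fun y => ciInf_le_of_le (hbdd _) (c • y) (map_smul_eq_mul q c (x, y)).le)

theorem iInfSnd_le (q : Seminorm 𝕜 (E × F)) (x : E) (y : F) : q.iInfSnd x ≤ q (x, y) :=
  ciInf_le ⟨0, Set.forall_mem_range.2 fun _ => apply_nonneg q _⟩ y

noncomputable def relComp (p : Seminorm 𝕜 (E × F)) (r : Seminorm 𝕜 (F × G)) :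
    Seminorm 𝕜 (E × G) :=
  (p.comp ((LinearMap.fst 𝕜 E G ∘ₗ LinearMap.fst 𝕜 _ F).prod (-LinearMap.snd 𝕜 (E × G) F)) +
    r.comp ((LinearMap.snd 𝕜 (E × G) F).prod (LinearMap.snd 𝕜 E G ∘ₗ LinearMap.fst 𝕜 _ F))).iInfSnd

theorem relComp_apply (p : Seminorm 𝕜 (E × F)) (r : Seminorm 𝕜 (F × G)) (x : E) (z : G) :
    p.relComp r (x, z) = ⨅ y, p (x, -y) + r (y, z) :=
  rfl

variable {p : Seminorm 𝕜 (E × F)} {r : Seminorm 𝕜 (F × G)}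

theorem relComp_le (x : E) (y : F) (z : G) : p.relComp r (x, z) ≤ p (x, -y) + r (y, z) :=
  iInfSnd_le _ _ y

theorem relComp_apply_left (h : ∀ y, p (0, y) = r (y, 0)) (x : E) :
    p.relComp r (x, 0) = p (x, 0) := by
  rw [relComp_apply]
  refine le_antisymm ((relComp_le x 0 0).trans_eq (by simp [Prod.mk_zero_zero]))
    (le_ciInf fun y => ?_)
  calc p (x, 0) = p ((x, -y) + (0, y)) := by simp
    _ ≤ p (x, -y) + p (0, y) := map_add_le_add _ _ _
    _ = p (x, -y) + r (y, 0) := by rw [h]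

theorem relComp_apply_right (h : ∀ y, p (0, y) = r (y, 0)) (z : G) :
    p.relComp r (0, z) = r (0, z) := by
  rw [relComp_apply]
  refine le_antisymm ((relComp_le 0 0 z).trans_eq (by simp [Prod.mk_zero_zero]))
    (le_ciInf fun y => ?_)
  calc r (0, z) = r ((-y, 0) + (y, z)) := by simp
    _ ≤ r (-y, 0) + r (y, z) := map_add_le_add _ _ _
    _ = p (0, -y) + r (y, z) := by rw [h]

end Seminorm

theorem stmt8_general {M₁ M₂ M₃ : Type*}
    [NormedAddCommGroup M₁] [NormedSpace ℝ M₁]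
    [NormedAddCommGroup M₂] [NormedSpace ℝ M₂]
    [NormedAddCommGroup M₃] [NormedSpace ℝ M₃]
    (L₁ : M₁ → ℝ) (L₂ : M₂ → ℝ) (L₃ : M₃ → ℝ)
    (L₁₂ : M₁ × M₂ → ℝ) (L₂₃ : M₂ × M₃ → ℝ)
    -- L₁₂ is a seminorm restricting to L₁ and L₂:
    (h12add : ∀ z w, L₁₂ (z + w) ≤ L₁₂ z + L₁₂ w)
    (h12smul : ∀ (c : ℝ) z, L₁₂ (c • z) = |c| * L₁₂ z)
    (h12l : ∀ x : M₁, L₁₂ (x, 0) = L₁ x) (h12r : ∀ y : M₂, L₁₂ (0, y) = L₂ y)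
    -- L₂₃ is a seminorm restricting to L₂ and L₃:
    (h23add : ∀ z w, L₂₃ (z + w) ≤ L₂₃ z + L₂₃ w)
    (h23smul : ∀ (c : ℝ) z, L₂₃ (c • z) = |c| * L₂₃ z)
    (h23l : ∀ y : M₂, L₂₃ (y, 0) = L₂ y) (h23r : ∀ w : M₃, L₂₃ (0, w) = L₃ w)
    (L₁₃ : M₁ × M₃ → ℝ)
    (hdef : ∀ x₁ x₃, L₁₃ (x₁, x₃) = ⨅ x₂ : M₂, (L₁₂ (x₁, -x₂) + L₂₃ (x₂, x₃))) :
    (∀ z, 0 ≤ L₁₃ z) ∧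
    (∀ z w, L₁₃ (z + w) ≤ L₁₃ z + L₁₃ w) ∧
    (∀ (c : ℝ) z, L₁₃ (c • z) = |c| * L₁₃ z) ∧
    (∀ x₁ : M₁, L₁₃ (x₁, 0) = L₁ x₁) ∧ (∀ x₃ : M₃, L₁₃ (0, x₃) = L₃ x₃) := by
  let p : Seminorm ℝ (M₁ × M₂) := .of L₁₂ h12add h12smul
  let r : Seminorm ℝ (M₂ × M₃) := .of L₂₃ h23add h23smul
  have hpr (y : M₂) : p (0, y) = r (y, 0) := (h12r y).trans (h23l y).symm
  obtain rfl : L₁₃ = p.relComp r := funext fun ⟨x₁, x₃⟩ => hdef x₁ x₃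
  exact ⟨apply_nonneg _, map_add_le_add _, map_smul_eq_mul _,
    fun x₁ => (Seminorm.relComp_apply_left hpr x₁).trans (h12l x₁),
    fun x₃ => (Seminorm.relComp_apply_right hpr x₃).trans (h23r x₃)⟩

/-- Given seminorms `L₁₂` on `M₁ ⊕ M₂` and `L₂₃` on `M₂ ⊕ M₃` restricting to
`L₁, L₂` and `L₂, L₃` respectively, the formula
`L₁₃(x₁,x₃) := inf_{x₂} (L₁₂(x₁,−x₂) + L₂₃(x₂,x₃))` defines a seminorm on `M₁ ⊕ M₃` with
`L₁₃(x₁,0) = L₁(x₁)` and `L₁₃(0,x₃) = L₃(x₃)`. -/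
theorem stmt8 {M₁ M₂ M₃ : Type*}
    [NormedAddCommGroup M₁] [NormedSpace ℝ M₁]
    [NormedAddCommGroup M₂] [NormedSpace ℝ M₂]
    [NormedAddCommGroup M₃] [NormedSpace ℝ M₃]
    (L₁ : M₁ → ℝ) (L₂ : M₂ → ℝ) (L₃ : M₃ → ℝ)
    (L₁₂ : M₁ × M₂ → ℝ) (L₂₃ : M₂ × M₃ → ℝ)
    -- L₁₂ is a seminorm restricting to L₁ and L₂:
    (h12nonneg : ∀ z, 0 ≤ L₁₂ z)
    (h12add : ∀ z w, L₁₂ (z + w) ≤ L₁₂ z + L₁₂ w)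
    (h12smul : ∀ (c : ℝ) z, L₁₂ (c • z) = |c| * L₁₂ z)
    (h12l : ∀ x : M₁, L₁₂ (x, 0) = L₁ x) (h12r : ∀ y : M₂, L₁₂ (0, y) = L₂ y)
    -- L₂₃ is a seminorm restricting to L₂ and L₃:
    (h23nonneg : ∀ z, 0 ≤ L₂₃ z)
    (h23add : ∀ z w, L₂₃ (z + w) ≤ L₂₃ z + L₂₃ w)
    (h23smul : ∀ (c : ℝ) z, L₂₃ (c • z) = |c| * L₂₃ z)
    (h23l : ∀ y : M₂, L₂₃ (y, 0) = L₂ y) (h23r : ∀ w : M₃, L₂₃ (0, w) = L₃ w)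
    (L₁₃ : M₁ × M₃ → ℝ)
    (hdef : ∀ x₁ x₃, L₁₃ (x₁, x₃) = ⨅ x₂ : M₂, (L₁₂ (x₁, -x₂) + L₂₃ (x₂, x₃))) :
    (∀ z, 0 ≤ L₁₃ z) ∧
    (∀ z w, L₁₃ (z + w) ≤ L₁₃ z + L₁₃ w) ∧
    (∀ (c : ℝ) z, L₁₃ (c • z) = |c| * L₁₃ z) ∧
    (∀ x₁ : M₁, L₁₃ (x₁, 0) = L₁ x₁) ∧ (∀ x₃ : M₃, L₁₃ (0, x₃) = L₃ x₃) :=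
  stmt8_general L₁ L₂ L₃ L₁₂ L₂₃ h12add h12smul h12l h12r h23add h23smul h23l h23r L₁₃ hdef
end

section
/- Let M be a von Neumann algebra on a Hilbert space H with separating vector Ω, and T, S ∈ B(H) injective operators such that x ↦ TxΩ and x ↦ SxΩ are compact on M. Define L₁(x) = ‖TxΩ‖, L₂(x) = ‖SxΩ‖, and J(x,y) = ‖TxΩ + SyΩ‖ on M ⊕ M. Then J is a seminorm restricting to L₁ and L₂ on the summands, and dist_{qGH*}((M,L₁), (M,L₂)) ≤ sup{ ‖(T−S)xΩ‖ : x ∈ M, ‖x‖ = 1 }. -/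
open Filter Topology
open scoped InnerProductSpace

lemma entry_bound {H : Type*} [NormedAddCommGroup H] [InnerProductSpace ℂ H] [CompleteSpace H]
    {M : Type*} [NormedRing M] [NormedAlgebra ℂ M] [StarRing M]
    (π : M →⋆ₐ[ℂ] (H →L[ℂ] H)) (hπ : ∀ x, ‖π x‖ = ‖x‖)
    {a : Matrix (Fin 2) (Fin 2) M} (ha : IsPos a) (ha' : IsPos (1 - a))
    (i j : Fin 2) : ‖a i j‖ ≤ 1 := by
  obtain ⟨b, hb⟩ := ha
  obtain ⟨c, hc⟩ := ha'
  -- squared norms sum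
  have hsum : ∀ (i : Fin 2) (ζ : H),
      ‖π (b 0 i) ζ‖^2 + ‖π (b 1 i) ζ‖^2 ≤ ‖ζ‖^2 := by
    intro i ζ
    have h1 : (star b * b) i i + (star c * c) i i = (1 : Matrix (Fin 2) (Fin 2) M) i i := by
      rw [← Matrix.add_apply, ← hb, ← hc, add_comm, sub_add_cancel]
    rw [Matrix.one_apply_eq] at h1
    have h2 : (star b * b) i i = star (b 0 i) * b 0 i + star (b 1 i) * b 1 i := by
      simp [Matrix.mul_apply, Fin.sum_univ_two, Matrix.star_apply]
    have h3 : (star c * c) i i = star (c 0 i) * c 0 i + star (c 1 i) * c 1 i := by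
      simp [Matrix.mul_apply, Fin.sum_univ_two, Matrix.star_apply]
    have key : (⟪ζ, ζ⟫_ℂ) = ⟪π (b 0 i) ζ, π (b 0 i) ζ⟫_ℂ + ⟪π (b 1 i) ζ, π (b 1 i) ζ⟫_ℂ
        + (⟪π (c 0 i) ζ, π (c 0 i) ζ⟫_ℂ + ⟪π (c 1 i) ζ, π (c 1 i) ζ⟫_ℂ) := by
      have : π (star (b 0 i) * b 0 i + star (b 1 i) * b 1 i
          + (star (c 0 i) * c 0 i + star (c 1 i) * c 1 i)) = 1 := by
        rw [← h2, ← h3, h1, map_one]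
      calc (⟪ζ, ζ⟫_ℂ) = ⟪ζ, (1 : H →L[ℂ] H) ζ⟫_ℂ := by simp
        _ = _ := by
          rw [← this]
          simp only [map_add, map_mul, map_star, ContinuousLinearMap.add_apply,
            ContinuousLinearMap.mul_apply, inner_add_right,
            ContinuousLinearMap.star_eq_adjoint, ContinuousLinearMap.adjoint_inner_right]
    rw [inner_self_eq_norm_sq_to_K (𝕜 := ℂ), inner_self_eq_norm_sq_to_K (𝕜 := ℂ),
      inner_self_eq_norm_sq_to_K (𝕜 := ℂ), inner_self_eq_norm_sq_to_K (𝕜 := ℂ),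
      inner_self_eq_norm_sq_to_K (𝕜 := ℂ)] at key
    have key' : ‖ζ‖^2 = ‖π (b 0 i) ζ‖^2 + ‖π (b 1 i) ζ‖^2
        + (‖π (c 0 i) ζ‖^2 + ‖π (c 1 i) ζ‖^2) := by exact_mod_cast key
    nlinarith [sq_nonneg ‖π (c 0 i) ζ‖, sq_nonneg ‖π (c 1 i) ζ‖]
  -- inner product identity
  have hinner : ∀ (η ξ : H), ⟪η, π (a i j) ξ⟫_ℂ
      = ⟪π (b 0 i) η, π (b 0 j) ξ⟫_ℂ + ⟪π (b 1 i) η, π (b 1 j) ξ⟫_ℂ := by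
    intro η ξ
    have h2 : a i j = star (b 0 i) * b 0 j + star (b 1 i) * b 1 j := by
      rw [hb]; simp [Matrix.mul_apply, Fin.sum_univ_two, Matrix.star_apply]
    rw [h2]
    simp only [map_add, map_mul, map_star, ContinuousLinearMap.add_apply,
      ContinuousLinearMap.mul_apply, inner_add_right,
      ContinuousLinearMap.star_eq_adjoint, ContinuousLinearMap.adjoint_inner_right]
  -- conclude
  rw [← hπ]
  refine ContinuousLinearMap.opNorm_le_bound _ zero_le_one (fun ξ => ?_)
  rw [one_mul]
  set η := π (a i j) ξ with hη
  have h1 : ‖η‖^2 ≤ ‖π (b 0 i) η‖ * ‖π (b 0 j) ξ‖ + ‖π (b 1 i) η‖ * ‖π (b 1 j) ξ‖ := by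
    have e1 : (‖η‖:ℂ)^2 = ⟪η, π (a i j) ξ⟫_ℂ := by
      rw [← hη]; exact (inner_self_eq_norm_sq_to_K (𝕜 := ℂ) η).symm
    calc ‖η‖^2 = ‖(‖η‖:ℂ)^2‖ := by
          rw [← Complex.ofReal_pow, Complex.norm_real]
          exact (abs_of_nonneg (by positivity)).symm
      _ = ‖⟪π (b 0 i) η, π (b 0 j) ξ⟫_ℂ + ⟪π (b 1 i) η, π (b 1 j) ξ⟫_ℂ‖ := by
          rw [e1, hinner]
      _ ≤ ‖⟪π (b 0 i) η, π (b 0 j) ξ⟫_ℂ‖ + ‖⟪π (b 1 i) η, π (b 1 j) ξ⟫_ℂ‖ := norm_add_le _ _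
      _ ≤ _ := add_le_add (norm_inner_le_norm _ _) (norm_inner_le_norm _ _)
  have h2 := hsum i η
  have h3 := hsum j ξ
  set p1 := ‖π (b 0 i) η‖; set p2 := ‖π (b 1 i) η‖
  set q1 := ‖π (b 0 j) ξ‖; set q2 := ‖π (b 1 j) ξ‖
  have hq : (p1*q1+p2*q2)^2 ≤ ‖η‖^2 * ‖ξ‖^2 := by
    nlinarith [sq_nonneg (p1*q2 - p2*q1), sq_nonneg p1, sq_nonneg p2, sq_nonneg q1, sq_nonneg q2,
      mul_nonneg (sq_nonneg ‖η‖) (sq_nonneg ‖ξ‖)]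
  have h5 : ‖η‖^2 * ‖η‖^2 ≤ ‖η‖^2 * ‖ξ‖^2 := by nlinarith [sq_nonneg ‖η‖]
  by_contra hcon
  push_neg at hcon
  have hN0 : 0 < ‖η‖ := lt_of_le_of_lt (norm_nonneg ξ) hcon
  have h6 : ‖η‖^2 ≤ ‖ξ‖^2 := le_of_mul_le_mul_left h5 (pow_pos hN0 2)
  nlinarith [h6, mul_pos (sub_pos.mpr hcon) (add_pos_of_pos_of_nonneg hN0 (norm_nonneg ξ))]

lemma matLift_nonneg_s15 {A : Type*} (L : A → ℝ) (h : ∀ x, 0 ≤ L x)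
    (m : Matrix (Fin 2) (Fin 2) A) : 0 ≤ matLift L m :=
  le_trans (h (m 0 0)) (le_trans (le_max_left _ _) (le_max_left _ _))

/-- Let `M` be a von Neumann algebra acting (via an isometric unital
`*`-representation `π`) on a separable Hilbert space `H` with separating vector `Ω`, and
`T, S ∈ B(H)` injective with `x ↦ T x Ω`, `x ↦ S x Ω` compact on `M`. With
`L₁ x = ‖T x Ω‖`, `L₂ x = ‖S x Ω‖` and `J(x,y) = ‖T x Ω + S y Ω‖`, `J` is an admissible
seminorm on `M ⊕ M` restricting to `L₁` and `L₂`, and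
`dist_{qGH*}((M,L₁),(M,L₂)) ≤ sup { ‖(T−S) x Ω‖ : ‖x‖ = 1 }`. -/
theorem stmt15 {H : Type*} [NormedAddCommGroup H] [InnerProductSpace ℂ H] [CompleteSpace H]
    [TopologicalSpace.SeparableSpace H]
    {M : Type*} [NormedRing M] [NormedAlgebra ℂ M] [StarRing M] [CStarRing M]
    [StarModule ℂ M] [CompleteSpace M]
    (π : M →⋆ₐ[ℂ] (H →L[ℂ] H)) (hπ : ∀ x, ‖π x‖ = ‖x‖)
    (Ω : H) (hΩ : ∀ x : M, π x Ω = 0 → x = 0)  -- Ω is separating for M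
    (T S : H →L[ℂ] H) (hT : Function.Injective T) (hS : Function.Injective S)
    (hcompT : IsCompact (closure ((fun x : M => T (π x Ω)) '' {x | ‖x‖ ≤ 1})))
    (hcompS : IsCompact (closure ((fun x : M => S (π x Ω)) '' {x | ‖x‖ ≤ 1})))
    (L₁ L₂ : M → ℝ) (hL₁ : ∀ x, L₁ x = ‖T (π x Ω)‖) (hL₂ : ∀ x, L₂ x = ‖S (π x Ω)‖)
    (J : M × M → ℝ) (hJ : ∀ x y : M, J (x, y) = ‖T (π x Ω) + S (π y Ω)‖) :
    J ∈ admissible L₁ L₂ ∧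
      distqGH L₁ L₂ ≤ sSup {r | ∃ x : M, ‖x‖ = 1 ∧ r = ‖(T - S) (π x Ω)‖} := by
    -- Admissibility of J
  have hadm : J ∈ admissible L₁ L₂ := by
    refine ⟨?_, ?_, ?_, ?_, ?_⟩
    · intro z
      obtain ⟨a, b⟩ := z
      rw [hJ]; exact norm_nonneg _
    · intro z w
      obtain ⟨a, b⟩ := z; obtain ⟨c, d⟩ := w
      simp only [Prod.mk_add_mk, hJ, map_add, ContinuousLinearMap.add_apply]
      rw [add_add_add_comm]
      exact norm_add_le _ _
    · intro c z
      obtain ⟨a, b⟩ := z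
      simp only [Prod.smul_mk, hJ, map_smul, ContinuousLinearMap.smul_apply, ← smul_add,
        norm_smul]
    · intro x
      rw [hJ, hL₁, map_zero]
      simp
    · intro y
      rw [hJ, hL₂, map_zero]
      simp
  refine ⟨hadm, ?_⟩
  set R := {r | ∃ x : M, ‖x‖ = 1 ∧ r = ‖(T - S) (π x Ω)‖} with hR
  -- R is bounded above
  have hRbdd : BddAbove R := by
    refine ⟨‖T - S‖ * ‖Ω‖, ?_⟩
    rintro r ⟨x, hx, rfl⟩
    calc ‖(T - S) (π x Ω)‖ ≤ ‖T - S‖ * ‖π x Ω‖ := (T - S).le_opNorm _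
      _ ≤ ‖T - S‖ * (‖π x‖ * ‖Ω‖) :=
        mul_le_mul_of_nonneg_left ((π x).le_opNorm Ω) (norm_nonneg _)
      _ = ‖T - S‖ * ‖Ω‖ := by rw [hπ, hx, one_mul]
  have hs0 : 0 ≤ sSup R := by
    rcases Set.eq_empty_or_nonempty R with h | ⟨r, x, hx, hr⟩
    · rw [h, Real.sSup_empty]
    · exact le_trans (hr ▸ norm_nonneg _) (le_csSup hRbdd ⟨x, hx, hr⟩)
  -- key scaling bound
  have hbound : ∀ x : M, ‖x‖ ≤ 1 → ‖(T - S) (π x Ω)‖ ≤ sSup R := by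
    intro x hx1
    by_cases hx0 : x = 0
    · subst hx0
      simpa using hs0
    · have hxn : (0:ℝ) < ‖x‖ := norm_pos_iff.mpr hx0
      set y : M := ((‖x‖ : ℂ))⁻¹ • x with hy
      have hyn : ‖y‖ = 1 := by
        rw [hy, norm_smul, norm_inv, Complex.norm_real, Real.norm_eq_abs,
          abs_of_nonneg (norm_nonneg x), inv_mul_cancel₀ (ne_of_gt hxn)]
      have hmem : ‖(T - S) (π y Ω)‖ ∈ R := ⟨y, hyn, rfl⟩
      have hval : ‖(T - S) (π y Ω)‖ = ‖x‖⁻¹ * ‖(T - S) (π x Ω)‖ := by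
        rw [hy, map_smul, ContinuousLinearMap.smul_apply, map_smul, norm_smul, norm_inv,
          Complex.norm_real, Real.norm_eq_abs, abs_of_nonneg (norm_nonneg x)]
      have h1 : ‖(T - S) (π x Ω)‖ = ‖x‖ * ‖(T - S) (π y Ω)‖ := by
        rw [hval, ← mul_assoc, mul_inv_cancel₀ (ne_of_gt hxn), one_mul]
      calc ‖(T - S) (π x Ω)‖ = ‖x‖ * ‖(T - S) (π y Ω)‖ := h1
        _ ≤ ‖x‖ * sSup R := mul_le_mul_of_nonneg_left (le_csSup hRbdd hmem) (le_of_lt hxn)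
        _ ≤ 1 * sSup R := mul_le_mul_of_nonneg_right hx1 hs0
        _ = sSup R := one_mul _
  -- J on (x, -x)
  have hJdiff : ∀ x : M, J (x, -x) = ‖(T - S) (π x Ω)‖ := by
    intro x
    rw [hJ, map_neg, ContinuousLinearMap.neg_apply, map_neg, ContinuousLinearMap.sub_apply]
    congr 1
    abel
  have hJnn : ∀ z, 0 ≤ J z := hadm.1
  -- entry values of the difference
  have hentry : ∀ (a : Matrix (Fin 2) (Fin 2) M), a ∈ posUnitBall M →
      matLift J (embL (N := M) a - embR (M := M) a) ≤ sSup R := by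
    intro a ⟨haP, haP'⟩
    have he : ∀ i j : Fin 2, (embL (N := M) a - embR (M := M) a) i j = (a i j, -(a i j)) := by
      intro i j
      simp [embL, embR, Matrix.sub_apply, Matrix.map_apply, Prod.mk_sub_mk]
    have hij : ∀ i j : Fin 2, J ((embL (N := M) a - embR (M := M) a) i j) ≤ sSup R := by
      intro i j
      rw [he, hJdiff]
      exact hbound _ (entry_bound π hπ haP haP' i j)
    exact max_le (max_le (hij 0 0) (hij 0 1)) (max_le (hij 1 0) (hij 1 1))
  -- the Hausdorff distance for J is at most sSup R
  set A := embL (N := M) '' posUnitBall M with hA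
  set B := embR (M := M) '' posUnitBall M with hB
  have hd : seminormHausdorffDist (matLift J) A B ≤ sSup R := by
    refine max_le (Real.iSup_le (fun x => ?_) hs0) (Real.iSup_le (fun y => ?_) hs0)
    · obtain ⟨a, haP, hax⟩ := x.2
      have hmemB : embR (M := M) a ∈ B := ⟨a, haP, rfl⟩
      refine ciInf_le_of_le ⟨0, ?_⟩ (⟨_, hmemB⟩ : B) ?_
      · rintro _ ⟨y, rfl⟩
        exact matLift_nonneg_s15 J hJnn _
      · rw [← hax]
        exact hentry a haP
    · obtain ⟨a, haP, hay⟩ := y.2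
      have hmemA : embL (N := M) a ∈ A := ⟨a, haP, rfl⟩
      refine ciInf_le_of_le ⟨0, ?_⟩ (⟨_, hmemA⟩ : A) ?_
      · rintro _ ⟨x, rfl⟩
        exact matLift_nonneg_s15 J hJnn _
      · rw [← hay]
        exact hentry a haP
  -- conclude via the infimum
  have hmemD : seminormHausdorffDist (matLift J) A B ∈
      {d | ∃ L ∈ admissible L₁ L₂, d = seminormHausdorffDist (matLift L)
        (embL (N := M) '' posUnitBall M) (embR (M := M) '' posUnitBall M)} :=
    ⟨J, hadm, rfl⟩
  have hDbdd : BddBelow {d | ∃ L ∈ admissible L₁ L₂, d = seminormHausdorffDist (matLift L)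
      (embL (N := M) '' posUnitBall M) (embR (M := M) '' posUnitBall M)} := by
    refine ⟨0, ?_⟩
    rintro d ⟨L, hL, rfl⟩
    refine le_trans ?_ (le_max_left _ _)
    exact Real.iSup_nonneg fun x => Real.iInf_nonneg fun y => matLift_nonneg_s15 L hL.1 _
  exact le_trans (csInf_le hDbdd hmemD) hd
end
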